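/- Let λ = (x_1, x_2) be a shape with at most two rows (x_1 ≥ x_2 ≥ 0), and set h_1 = x_1 + x_2 and h_2 = x_1 − x_2. Then for every m ≥ 0, O_3^0(λ, m) = F(m+2, h_1+2)·F(m, h_2) − F(m+2, h_2)·F(m, h_1+2). -/

import Mathlib

/-!
An oscillating tableau with at most two rows is a walk from the origin with unit steps in the
chamber `0 ≤ x₂ ≤ x₁` of `ℤ²`. Sorting by the last step, the number `O(m, x)` of such walks
ending at `x` satisfies `O(m + 1, x) = ∑ O(m, x + d)` over the unit steps `d` with `x + d` in the
chamber, and `O(0, x) = δ_{x,0}`.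

Reflecting the ballot numbers at `-1` extends `F(n, ·)` to a solution of
`F(n + 1, h) = F(n, h + 1) + F(n, h - 1)` on all of `ℤ` vanishing at `-1`. So the right-hand side,
as a function of `x` through `h₁ = x₁ + x₂` and `h₂ = x₁ - x₂`, satisfies the same recurrence
without the chamber constraint. It vanishes on the wall `x₂ = -1` (there `h₂ = h₁ + 2` and the two
products cancel) and on the wall `x₁ = x₂ - 1` (there `h₂ = -1`), which are exactly the points a
unit step can leave the chamber to; hence both sides obey one recurrence and agree at `m = 0`.
-/

/-- The empty shape (Ferrers diagram with no squares). -/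
def emptyShape : ℕ → ℕ := fun _ => 0

/-- `f : ℕ → ℕ` represents a shape (integer partition / Ferrers diagram), recording the
number of squares in each row (0-indexed): rows are weakly decreasing and eventually zero. -/
def IsShape (f : ℕ → ℕ) : Prop := (∀ i, f (i + 1) ≤ f i) ∧ ∃ N, f N = 0

/-- The shape `f` has at most `r` (nonzero) rows. -/
def RowsLE (r : ℕ) (f : ℕ → ℕ) : Prop := f r = 0

/-- `mu` is obtained from `lam` by adding one square in row `j` (0-indexed). -/
def AddSquareAt (j : ℕ) (lam mu : ℕ → ℕ) : Prop :=
  mu j = lam j + 1 ∧ ∀ i, i ≠ j → mu i = lam i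

/-- `mu` is obtained from `lam` by adding one square. -/
def AddSquare (lam mu : ℕ → ℕ) : Prop := ∃ j, AddSquareAt j lam mu

/-- `mu` and `lam` differ by exactly one square (added or removed). -/
def OscStep (lam mu : ℕ → ℕ) : Prop := AddSquare lam mu ∨ AddSquare mu lam

/-- `mu` is obtained from `lam` by adding one square, removing one square, or doing nothing. -/
def StarStep (lam mu : ℕ → ℕ) : Prop := mu = lam ∨ OscStep lam mu

/-- `t` encodes a `*`-tableaux of shape `lam` and length `m`, all of whose shapes have at
most `k - 1` rows: `t 0 = ∅`, `t m = lam`, consecutive shapes differ by at most one square,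
and the sequence is padded by `lam` from index `m` on (so that `t` is determined by its
values `t 0, …, t m`). -/
def IsStarTab (k : ℕ) (lam : ℕ → ℕ) (m : ℕ) (t : ℕ → ℕ → ℕ) : Prop :=
  t 0 = emptyShape ∧ (∀ i, m ≤ i → t i = lam) ∧
  (∀ i, i < m → StarStep (t i) (t (i + 1))) ∧
  ∀ i, IsShape (t i) ∧ RowsLE (k - 1) (t i)

/-- `t` encodes an oscillating tableaux: a `*`-tableaux whose consecutive shapes differ. -/
def IsOscTab (k : ℕ) (lam : ℕ → ℕ) (m : ℕ) (t : ℕ → ℕ → ℕ) : Prop :=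
  IsStarTab k lam m t ∧ ∀ i, i < m → t (i + 1) ≠ t i

/-- `O_k^*(lam, m)`: the number of `*`-tableaux of shape `lam` and length `m`, all of whose
shapes have at most `k - 1` rows. -/
noncomputable def Ostar (k : ℕ) (lam : ℕ → ℕ) (m : ℕ) : ℕ :=
  Nat.card {t : ℕ → ℕ → ℕ // IsStarTab k lam m t}

/-- `O_k^0(lam, m)`: the number of oscillating tableaux of shape `lam` and length `m`, all of
whose shapes have at most `k - 1` rows. -/
noncomputable def Oosc (k : ℕ) (lam : ℕ → ℕ) (m : ℕ) : ℕ :=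
  Nat.card {t : ℕ → ℕ → ℕ // IsOscTab k lam m t}

/-- A `(+□₁, −□₁)`-pair at position `i` of a tableaux of length `m`: a square is added in the
first row and immediately removed again. -/
def PairAt (m : ℕ) (t : ℕ → ℕ → ℕ) (i : ℕ) : Prop :=
  i + 2 ≤ m ∧ AddSquareAt 0 (t i) (t (i + 1)) ∧ t (i + 2) = t i

/-- `Q_k^*(lam, m, j)`: the number of `*`-tableaux of shape `lam` and length `m` with at most
`k - 1` rows containing exactly `j` `(+□₁, −□₁)`-pairs. -/
noncomputable def Qstar (k : ℕ) (lam : ℕ → ℕ) (m j : ℕ) : ℕ :=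
  Nat.card {t : ℕ → ℕ → ℕ //
    IsStarTab k lam m t ∧ Nat.card {i : ℕ // PairAt m t i} = j}

/-- `W_k^*(lam, m)`: the number of `*`-tableaux of shape `lam` and length `m` with at most
`k - 1` rows containing no `(+□₁, −□₁)`-pair. -/
noncomputable def Wstar (k : ℕ) (lam : ℕ → ℕ) (m : ℕ) : ℕ :=
  Nat.card {t : ℕ → ℕ → ℕ // IsStarTab k lam m t ∧ ∀ i, ¬ PairAt m t i}

/-- `M` is a partial matching on `[n] = {1, …, n}`: a set of arcs `(i, j)` with
`1 ≤ i < j ≤ n` such that every vertex lies in at most one arc. -/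
def IsPartialMatching (n : ℕ) (M : Finset (ℕ × ℕ)) : Prop :=
  (∀ p ∈ M, 1 ≤ p.1 ∧ p.1 < p.2 ∧ p.2 ≤ n) ∧
  ∀ p ∈ M, ∀ q ∈ M, p ≠ q → p.1 ≠ q.1 ∧ p.1 ≠ q.2 ∧ p.2 ≠ q.1 ∧ p.2 ≠ q.2

/-- `M` contains a `k`-crossing: arcs `(i₁,j₁), …, (i_k,j_k)` with
`i₁ < ⋯ < i_k < j₁ < ⋯ < j_k`. -/
def HasKCrossing (k : ℕ) (M : Finset (ℕ × ℕ)) : Prop :=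
  ∃ a : Fin k → ℕ × ℕ, (∀ i, a i ∈ M) ∧
    (∀ i j, i < j → (a i).1 < (a j).1) ∧
    (∀ i j, i < j → (a i).2 < (a j).2) ∧
    ∀ i j, (a i).1 < (a j).2

/-- `M` is a `k`-noncrossing partial matching on `[n]`. -/
def KNoncrossingPM (k n : ℕ) (M : Finset (ℕ × ℕ)) : Prop :=
  IsPartialMatching n M ∧ ¬ HasKCrossing k M

/-- `f_k^*(n)`: the number of `k`-noncrossing partial matchings on `[n]`. -/
noncomputable def fstar (k n : ℕ) : ℕ :=
  Nat.card {M : Finset (ℕ × ℕ) // KNoncrossingPM k n M}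

/-- `M` is a matching on `[n]`: a partial matching in which every vertex lies in an arc. -/
def IsMatching (n : ℕ) (M : Finset (ℕ × ℕ)) : Prop :=
  IsPartialMatching n M ∧ ∀ v, 1 ≤ v → v ≤ n → ∃ p ∈ M, p.1 = v ∨ p.2 = v

/-- `f_k(n)`: the number of `k`-noncrossing matchings on `[n]`. -/
noncomputable def fmatch (k n : ℕ) : ℕ :=
  Nat.card {M : Finset (ℕ × ℕ) // IsMatching n M ∧ ¬ HasKCrossing k M}

/-- `M` is a `k`-noncrossing RNA structure on `[n]`: a `k`-noncrossing partial matching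
without `1`-arcs `(i, i+1)`. -/
def IsRNA (k n : ℕ) (M : Finset (ℕ × ℕ)) : Prop :=
  KNoncrossingPM k n M ∧ ∀ i, (i, i + 1) ∉ M

/-- `S_k(n)`: the number of `k`-noncrossing RNA structures on `[n]`. -/
noncomputable def Snum (k n : ℕ) : ℕ :=
  Nat.card {M : Finset (ℕ × ℕ) // IsRNA k n M}

/-- `F(n, h)`: the number of `±1`-sequences of length `n` with all partial sums nonnegative
and total sum `h` (lattice paths from `(0,0)` to `(n,h)` staying in the first quadrant). -/
noncomputable def Fpath (n h : ℕ) : ℕ :=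
  Nat.card {s : Fin n → ℤ // (∀ i, s i = 1 ∨ s i = -1) ∧
    (∀ m : ℕ, 0 ≤ ∑ i ∈ Finset.univ.filter (fun i : Fin n => (i : ℕ) < m), s i) ∧
    (∑ i, s i) = (h : ℤ)}

/-- The two-row shape `(x₁, x₂)`. -/
def twoRowShape (x1 x2 : ℕ) : ℕ → ℕ :=
  fun i => if i = 0 then x1 else if i = 1 then x2 else 0

/-- Add one square to row `h` (0-indexed) of `f`. -/
def addRow (h : ℕ) (f : ℕ → ℕ) : ℕ → ℕ := fun i => if i = h then f i + 1 else f i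

/-- Remove one square from row `h` (0-indexed) of `f`. -/
def subRow (h : ℕ) (f : ℕ → ℕ) : ℕ → ℕ := fun i => if i = h then f i - 1 else f i

/-- `V_k^*(ν, m) = W_k^*(ν, m) − W_k^*(ν⁻, m−1)`, where `ν⁻` is `ν` with one square removed
from the first row, and the second term is `0` if `ν` has an empty first row (invalid `ν⁻`). -/
noncomputable def Vstar (k : ℕ) (nu : ℕ → ℕ) (m : ℕ) : ℤ :=
  (Wstar k nu m : ℤ) - if 0 < nu 0 then (Wstar k (subRow 0 nu) (m - 1) : ℤ) else 0

/-- The hyperbolic Bessel function of the first kind of order `r` evaluated at `2x`, as a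
formal power series: `I_r(2x) = Σ_{j ≥ max(0,−r)} x^{2j+r}/(j!·(r+j)!)`. -/
noncomputable def besselI (r : ℤ) : PowerSeries ℚ :=
  PowerSeries.mk fun n =>
    if r.natAbs ≤ n ∧ (n : ℤ) % 2 = r % 2 then
      (1 : ℚ) / (((((n : ℤ) - r) / 2).toNat.factorial * ((((n : ℤ) + r) / 2).toNat.factorial) : ℕ) : ℚ)
    else 0

section Ballot

variable {n : ℕ} {h : ℤ}

/-- `Fpath` with an integer endpoint, so that its recurrence needs no truncated subtraction. -/
def IsBallotSeq (n : ℕ) (h : ℤ) (s : Fin n → ℤ) : Prop :=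
  (∀ i, s i = 1 ∨ s i = -1) ∧
    (∀ m : ℕ, 0 ≤ ∑ i ∈ Finset.univ.filter (fun i : Fin n => (i : ℕ) < m), s i) ∧
    ∑ i, s i = h

noncomputable def ballotCount (n : ℕ) (h : ℤ) : ℕ :=
  Nat.card {s : Fin n → ℤ // IsBallotSeq n h s}

lemma sum_filter_lt_snoc (s : Fin n → ℤ) (c : ℤ) (m : ℕ) :
    ∑ i ∈ Finset.univ.filter (fun i : Fin (n + 1) => (i : ℕ) < m),
        (Fin.snoc s c : Fin (n + 1) → ℤ) i
      = ∑ i ∈ Finset.univ.filter (fun i : Fin n => (i : ℕ) < m), s i +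
          if n < m then c else 0 := by
  simp [Finset.sum_filter, Fin.sum_univ_castSucc]

lemma sum_filter_lt_of_le {m : ℕ} (s : Fin n → ℤ) (hm : n ≤ m) :
    ∑ i ∈ Finset.univ.filter (fun i : Fin n => (i : ℕ) < m), s i = ∑ i, s i := by
  rw [Finset.filter_true_of_mem fun i _ => i.2.trans_le hm]

lemma IsBallotSeq.nonneg {s : Fin n → ℤ} (hs : IsBallotSeq n h s) : 0 ≤ h := by
  simpa [sum_filter_lt_of_le s le_rfl, hs.2.2] using hs.2.1 n

lemma isBallotSeq_snoc_iff {c : ℤ} (hc : c = 1 ∨ c = -1) (hh : 0 ≤ h) (s : Fin n → ℤ) :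
    IsBallotSeq (n + 1) h (Fin.snoc s c) ↔ IsBallotSeq n (h - c) s := by
  simp only [IsBallotSeq, Fin.forall_fin_succ', Fin.snoc_castSucc, Fin.snoc_last,
    sum_filter_lt_snoc, Fin.sum_univ_castSucc, hc, and_true]
  refine and_congr_right fun _ => ⟨fun ⟨hpos, hsum⟩ => ⟨fun m => ?_, by omega⟩,
    fun ⟨hpos, hsum⟩ => ⟨fun m => ?_, by omega⟩⟩
  · rcases le_or_gt m n with hm | hm
    · simpa [hm.not_gt] using hpos m
    · simpa [sum_filter_lt_of_le s hm.le, sum_filter_lt_of_le s le_rfl] using hpos n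
  · rcases le_or_gt m n with hm | hm
    · simpa [hm.not_gt] using hpos m
    · simp only [sum_filter_lt_of_le s hm.le, if_pos hm]; omega

def ballotSnocEquiv {c : ℤ} (hc : c = 1 ∨ c = -1) (hh : 0 ≤ h) :
    {s : Fin n → ℤ // IsBallotSeq n (h - c) s} ≃
      {s : Fin (n + 1) → ℤ // IsBallotSeq (n + 1) h s ∧ s (Fin.last n) = c} where
  toFun s := ⟨Fin.snoc s.1 c, (isBallotSeq_snoc_iff hc hh _).2 s.2, Fin.snoc_last ..⟩
  invFun s := ⟨Fin.init s.1, by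
    obtain ⟨s, hs, rfl⟩ := s
    rwa [← isBallotSeq_snoc_iff hc hh, Fin.snoc_init_self]⟩
  left_inv s := Subtype.ext (Fin.init_snoc (α := fun _ => ℤ) _ _)
  right_inv := by
    rintro ⟨s, hs, rfl⟩
    exact Subtype.ext (Fin.snoc_init_self s)

instance finite_isBallotSeq (n : ℕ) (h : ℤ) : Finite {s : Fin n → ℤ // IsBallotSeq n h s} :=
  Finite.of_injective (fun s i => decide (s.1 i = 1)) fun s t hst =>
    Subtype.ext <| funext fun i => by
      have := congrFun hst i
      rcases s.2.1 i with hs | hs <;> rcases t.2.1 i with ht | ht <;> simp_all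

lemma ballotCount_of_neg (hh : h < 0) : ballotCount n h = 0 :=
  have : IsEmpty {s // IsBallotSeq n h s} := ⟨fun s => absurd s.2.nonneg hh.not_ge⟩
  Nat.card_of_isEmpty

lemma ballotCount_zero (h : ℤ) : ballotCount 0 h = if h = 0 then 1 else 0 := by
  split_ifs with hh
  · subst hh
    exact Nat.card_eq_one_iff_unique.2
      ⟨inferInstance, ⟨⟨Fin.elim0, by simp [IsBallotSeq]⟩⟩⟩
  · have : IsEmpty {s // IsBallotSeq 0 h s} :=
      ⟨fun s => hh (by simpa [IsBallotSeq] using s.2.2.2.symm)⟩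
    exact Nat.card_of_isEmpty

lemma ballotCount_succ (hh : 0 ≤ h) :
    ballotCount (n + 1) h = ballotCount n (h - 1) + ballotCount n (h + 1) := by
  classical
  have hlast (s : Fin (n + 1) → ℤ) : IsBallotSeq (n + 1) h s ↔
      (IsBallotSeq (n + 1) h s ∧ s (Fin.last n) = 1) ∨
        (IsBallotSeq (n + 1) h s ∧ s (Fin.last n) = -1) := by
    rw [← and_or_left, iff_self_and]; exact fun hs => hs.1 _
  have hdisj :
      Disjoint (fun s : Fin (n + 1) → ℤ => IsBallotSeq (n + 1) h s ∧ s (Fin.last n) = 1)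
        (fun s => IsBallotSeq (n + 1) h s ∧ s (Fin.last n) = -1) := by
    simp only [Pi.disjoint_iff, Prop.disjoint_iff]; omega
  rw [ballotCount, ballotCount, ballotCount, ← Nat.card_sum, ← sub_neg_eq_add]
  exact Nat.card_congr <| (Equiv.subtypeEquivRight hlast).trans <|
    (subtypeOrEquiv _ _ hdisj).trans
      ((ballotSnocEquiv (Or.inl rfl) hh).sumCongr (ballotSnocEquiv (Or.inr rfl) hh)).symm

end Ballot

section SignedBallot

/-- The ballot numbers reflected at `-1`: walks from `0` to `h` minus walks from `-2` to `h`. -/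
def signedBallot : ℕ → ℤ → ℤ
  | 0, h => if h = 0 then 1 else if h = -2 then -1 else 0
  | n + 1, h => signedBallot n (h + 1) + signedBallot n (h - 1)

lemma signedBallot_zero_of_pos {h : ℤ} (hh : 0 < h) : signedBallot 0 h = 0 := by
  simp only [signedBallot]; split_ifs <;> omega

lemma signedBallot_two_of_pos {h : ℤ} (hh : 2 < h) : signedBallot 2 h = 0 := by
  simp (disch := omega) only [signedBallot.eq_2, signedBallot_zero_of_pos, add_zero]

lemma signedBallot_neg_sub_two (n : ℕ) (h : ℤ) :
    signedBallot n (-h - 2) = -signedBallot n h := by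
  induction n generalizing h with
  | zero => simp only [signedBallot]; split_ifs <;> omega
  | succ n ih =>
    simp only [signedBallot]
    rw [show -h - 2 + 1 = -(h - 1) - 2 by ring, show -h - 2 - 1 = -(h + 1) - 2 by ring, ih, ih]
    ring

lemma signedBallot_neg_one (n : ℕ) : signedBallot n (-1) = 0 := by
  have := signedBallot_neg_sub_two n (-1)
  norm_num at this
  omega

lemma signedBallot_eq_ballotCount {n : ℕ} {h : ℤ} (hh : -1 ≤ h) :
    signedBallot n h = ballotCount n h := by
  induction n generalizing h with
  | zero => simp only [signedBallot, ballotCount_zero]; split_ifs <;> simp_all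
  | succ n ih =>
    rcases hh.eq_or_lt with rfl | hh
    · rw [signedBallot_neg_one, ballotCount_of_neg (by norm_num)]; rfl
    · rw [signedBallot, ballotCount_succ (by omega), ih (by omega), ih (by omega)]
      push_cast; ring

lemma Fpath_eq_signedBallot (n h : ℕ) : (Fpath n h : ℤ) = signedBallot n h :=
  (signedBallot_eq_ballotCount (by omega)).symm

end SignedBallot

section Tableaux

variable {k m : ℕ} {lam mu : ℕ → ℕ} {t : ℕ → ℕ → ℕ}

lemma IsShape.eq_zero_of_rowsLE {r j : ℕ} (hf : IsShape lam) (hr : RowsLE r lam) (hj : r ≤ j) :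
    lam j = 0 := by
  induction j, hj using Nat.le_induction with
  | base => exact hr
  | succ j _ ih => exact Nat.eq_zero_of_le_zero (ih ▸ hf.1 j)

lemma StarStep.apply_le (h : StarStep lam mu) (j : ℕ) : mu j ≤ lam j + 1 := by
  rcases h with rfl | ⟨i, hi, hne⟩ | ⟨i, hi, hne⟩
  · omega
  all_goals
    by_cases hij : j = i
    · subst hij; omega
    · rw [hne j hij]; omega

lemma OscStep.ne (h : OscStep lam mu) : lam ≠ mu := by
  rintro rfl
  rcases h with ⟨i, hi, -⟩ | ⟨i, hi, -⟩ <;> omega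

lemma IsStarTab.apply_le (ht : IsStarTab k lam m t) (i j : ℕ) : t i j ≤ i := by
  induction i with
  | zero => simp [ht.1, emptyShape]
  | succ i ih =>
    rcases lt_or_ge i m with hi | hi
    · have := (ht.2.2.1 i hi).apply_le j; omega
    · rw [ht.2.1 (i + 1) (by omega), ← ht.2.1 i hi]; omega

instance finite_isStarTab : Finite {t // IsStarTab k lam m t} := by
  refine Finite.of_injective (β := Fin (m + 1) → Fin (k - 1) → Fin (m + 1))
    (fun t i j => ⟨t.1 i j, (t.2.apply_le i j).trans_lt i.2⟩) fun t u htu => ?_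
  ext i j : 3
  rcases le_or_gt m i with hi | hi
  · rw [t.2.2.1 i hi, u.2.2.1 i hi]
  rcases le_or_gt (k - 1) j with hj | hj
  · rw [(t.2.2.2.2 i).1.eq_zero_of_rowsLE (t.2.2.2.2 i).2 hj,
      (u.2.2.2.2 i).1.eq_zero_of_rowsLE (u.2.2.2.2 i).2 hj]
  · simpa using congrFun (congrFun htu ⟨i, by omega⟩) ⟨j, hj⟩

instance finite_isOscTab : Finite {t // IsOscTab k lam m t} :=
  Finite.of_injective (fun t => (⟨t.1, t.2.1⟩ : {t // IsStarTab k lam m t}))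
    fun _ _ h => Subtype.ext (congrArg Subtype.val h :)

lemma Oosc_emptyShape_zero : Oosc k emptyShape 0 = 1 := by
  refine Nat.card_eq_one_iff_unique.2 ⟨⟨fun t u => Subtype.ext ?_⟩, ?_⟩
  · funext i; rw [t.2.1.2.1 i i.zero_le, u.2.1.2.1 i i.zero_le]
  · exact ⟨⟨fun _ => emptyShape, ⟨rfl, fun _ _ => rfl, by simp,
      fun _ => ⟨⟨fun _ => le_rfl, 0, rfl⟩, rfl⟩⟩, by simp⟩⟩

lemma Oosc_zero_of_ne (h : lam ≠ emptyShape) : Oosc k lam 0 = 0 :=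
  have : IsEmpty {t // IsOscTab k lam 0 t} := ⟨fun t => h (t.2.1.2.1 0 le_rfl ▸ t.2.1.1)⟩
  Nat.card_of_isEmpty

def IsOscNbr (k : ℕ) (lam mu : ℕ → ℕ) : Prop :=
  (IsShape mu ∧ RowsLE (k - 1) mu) ∧ OscStep mu lam

lemma IsOscTab.truncate (ht : IsOscTab k lam (m + 1) t) :
    IsOscTab k (t m) m (fun i => t (min i m)) := by
  obtain ⟨⟨h0, -, hstep, hshape⟩, hne⟩ := ht
  refine ⟨⟨by simpa using h0, fun i hi => congrArg t (min_eq_right hi), fun i hi => ?_,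
    fun i => hshape _⟩, fun i hi => ?_⟩
  · simpa [min_eq_left hi.le, min_eq_left (Nat.succ_le_of_lt hi)] using hstep i (by omega)
  · simpa [min_eq_left hi.le, min_eq_left (Nat.succ_le_of_lt hi)] using hne i (by omega)

lemma IsOscTab.isOscNbr (ht : IsOscTab k lam (m + 1) t) : IsOscNbr k lam (t m) := by
  obtain ⟨⟨-, hpad, hstep, hshape⟩, hne⟩ := ht
  rw [← hpad (m + 1) le_rfl]
  exact ⟨hshape m, (hstep m m.lt_succ_self).resolve_left (hne m m.lt_succ_self)⟩

lemma IsOscTab.extend (hlam : IsShape lam ∧ RowsLE (k - 1) lam) (hmu : OscStep mu lam)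
    (ht : IsOscTab k mu m t) : IsOscTab k lam (m + 1) (fun i => if i ≤ m then t i else lam) := by
  obtain ⟨⟨h0, hpad, hstep, hshape⟩, hne⟩ := ht
  refine ⟨⟨by simpa using h0, fun i hi => if_neg (by omega), fun i hi => ?_,
    fun i => by dsimp only; split_ifs; exacts [hshape i, hlam]⟩, fun i hi => ?_⟩
  · rcases (Nat.lt_succ_iff.1 hi).lt_or_eq with hi | rfl
    · simpa [hi.le, Nat.succ_le_of_lt hi] using hstep i hi
    · simp only [le_refl, ite_true, Nat.not_succ_le_self, ite_false, hpad i le_rfl]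
      exact Or.inr hmu
  · rcases (Nat.lt_succ_iff.1 hi).lt_or_eq with hi | rfl
    · simpa [hi.le, Nat.succ_le_of_lt hi] using hne i hi
    · simpa [hpad i le_rfl] using hmu.ne.symm

def oscTabSuccEquiv (hlam : IsShape lam ∧ RowsLE (k - 1) lam) :
    {t // IsOscTab k lam (m + 1) t} ≃
      Σ mu : {mu // IsOscNbr k lam mu}, {t // IsOscTab k mu.1 m t} where
  toFun t := ⟨⟨t.1 m, t.2.isOscNbr⟩, ⟨_, t.2.truncate⟩⟩
  invFun q := ⟨_, q.2.2.extend hlam q.1.2.2⟩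
  left_inv t := Subtype.ext <| funext fun i => by
    by_cases hi : i ≤ m
    · simp [hi]
    · simp [hi, t.2.1.2.1 i (by omega)]
  right_inv q := Sigma.subtype_ext (Subtype.ext (by simp [q.2.2.1.2.1 m le_rfl])) <|
    funext fun i => by
      by_cases hi : i ≤ m
      · simp [hi]
      · simp [min_eq_right (le_of_not_ge hi), q.2.2.1.2.1 i (by omega), q.2.2.1.2.1 m le_rfl]

lemma Oosc_succ (hlam : IsShape lam ∧ RowsLE (k - 1) lam) :
    Oosc k lam (m + 1) =
      Nat.card (Σ mu : {mu // IsOscNbr k lam mu}, {t // IsOscTab k mu.1 m t}) :=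
  Nat.card_congr (oscTabSuccEquiv hlam)

end Tableaux

section TwoRows

def weylChamber : Set (ℤ × ℤ) := {p | 0 ≤ p.2 ∧ p.2 ≤ p.1}

/-- Only meaningful on `weylChamber`, since `Int.toNat` truncates. -/
def shapeOf (p : ℤ × ℤ) : ℕ → ℕ := twoRowShape p.1.toNat p.2.toNat

def unitSteps : Finset (ℤ × ℤ) := {(1, 0), (-1, 0), (0, 1), (0, -1)}

variable {p q : ℤ × ℤ}

lemma mem_weylChamber : p ∈ weylChamber ↔ 0 ≤ p.2 ∧ p.2 ≤ p.1 := Iff.rfl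

lemma shapeOf_injOn : Set.InjOn shapeOf weylChamber := fun p hp q hq h => by
  have h0 : p.1.toNat = q.1.toNat := congrFun h 0
  have h1 : p.2.toNat = q.2.toNat := congrFun h 1
  obtain ⟨hp2, hp1⟩ := hp
  obtain ⟨hq2, hq1⟩ := hq
  ext <;> omega

lemma shapeOf_zero : shapeOf 0 = emptyShape := by
  funext i; simp [shapeOf, twoRowShape, emptyShape]

lemma isShape_twoRowShape {a b : ℕ} (h : b ≤ a) : IsShape (twoRowShape a b) :=
  ⟨fun i => by rcases i with _ | _ | i <;> simp [twoRowShape, h], 2, rfl⟩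

lemma isShape_shapeOf (hp : p ∈ weylChamber) : IsShape (shapeOf p) :=
  isShape_twoRowShape (by rw [mem_weylChamber] at hp; omega)

lemma exists_eq_shapeOf {mu : ℕ → ℕ} (hmu : IsShape mu) (hr : RowsLE 2 mu) :
    ∃ q ∈ weylChamber, mu = shapeOf q := by
  refine ⟨(mu 0, mu 1), ⟨by simp, by simpa using hmu.1 0⟩, funext fun i => ?_⟩
  rcases i with _ | _ | i
  · simp [shapeOf, twoRowShape]
  · simp [shapeOf, twoRowShape]
  · simpa [shapeOf, twoRowShape] using hmu.eq_zero_of_rowsLE hr (by omega : 2 ≤ i + 2)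

lemma addSquare_twoRowShape_iff {a b c d : ℕ} :
    AddSquare (twoRowShape a b) (twoRowShape c d) ↔
      (c = a + 1 ∧ d = b) ∨ (c = a ∧ d = b + 1) := by
  constructor
  · rintro ⟨j, hj, hne⟩
    rcases j with _ | _ | j
    · simpa [twoRowShape] using Or.inl ⟨hj, hne 1 one_ne_zero⟩
    · simpa [twoRowShape] using Or.inr ⟨hne 0 zero_ne_one, hj⟩
    · simp [twoRowShape] at hj
  · rintro (⟨rfl, rfl⟩ | ⟨rfl, rfl⟩)
    · exact ⟨0, by simp [twoRowShape], fun i hi => by simp [twoRowShape, hi]⟩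
    · exact ⟨1, by simp [twoRowShape], fun i hi => by simp [twoRowShape, hi]⟩

lemma oscStep_shapeOf_iff (hp : p ∈ weylChamber) (hq : q ∈ weylChamber) :
    OscStep (shapeOf q) (shapeOf p) ↔ q - p ∈ unitSteps := by
  obtain ⟨hp2, hp1⟩ := hp
  obtain ⟨hq2, hq1⟩ := hq
  simp only [OscStep, shapeOf, addSquare_twoRowShape_iff, unitSteps, Finset.mem_insert,
    Finset.mem_singleton, Prod.ext_iff, Prod.fst_sub, Prod.snd_sub]
  omega

noncomputable def oscCount (m : ℕ) (q : ℤ × ℤ) : ℕ :=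
  Nat.card {t // q ∈ weylChamber ∧ IsOscTab 3 (shapeOf q) m t}

lemma oscCount_of_mem (hq : q ∈ weylChamber) (m : ℕ) : oscCount m q = Oosc 3 (shapeOf q) m :=
  Nat.card_congr (Equiv.subtypeEquivRight fun _ => and_iff_right hq)

lemma oscCount_of_not_mem (hq : q ∉ weylChamber) (m : ℕ) : oscCount m q = 0 :=
  have : IsEmpty {t // q ∈ weylChamber ∧ IsOscTab 3 (shapeOf q) m t} := ⟨fun t => hq t.2.1⟩
  Nat.card_of_isEmpty

instance finite_oscCount (m : ℕ) (q : ℤ × ℤ) :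
    Finite {t // q ∈ weylChamber ∧ IsOscTab 3 (shapeOf q) m t} :=
  Finite.of_injective (fun t => (⟨t.1, t.2.2⟩ : {t // IsOscTab 3 (shapeOf q) m t}))
    fun _ _ h => Subtype.ext (congrArg Subtype.val h :)

noncomputable def oscTabLastStepEquiv (hp : p ∈ weylChamber) (m : ℕ) :
    (Σ d : unitSteps, {t // p + d ∈ weylChamber ∧ IsOscTab 3 (shapeOf (p + d)) m t}) ≃
      Σ mu : {mu // IsOscNbr 3 (shapeOf p) mu}, {t // IsOscTab 3 mu.1 m t} := by
  refine Equiv.ofBijective (fun x => ⟨⟨shapeOf (p + x.1), ⟨isShape_shapeOf x.2.2.1, rfl⟩,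
    (oscStep_shapeOf_iff hp x.2.2.1).2 (by simp)⟩, ⟨x.2.1, x.2.2.2⟩⟩) ⟨?_, ?_⟩
  · rintro ⟨d, t, hd, ht⟩ ⟨d', t', hd', ht'⟩ h
    have hdd' : d = d' := Subtype.ext <| add_left_cancel <|
      shapeOf_injOn hd hd' (congrArg (·.1) (congrArg Sigma.fst h))
    subst hdd'
    exact Sigma.subtype_ext rfl (congrArg (fun x => x.2.1) h :)
  · rintro ⟨⟨mu, ⟨hmu, hr⟩, hstep⟩, t, ht⟩
    obtain ⟨q, hq, rfl⟩ := exists_eq_shapeOf hmu hr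
    refine ⟨⟨⟨q - p, (oscStep_shapeOf_iff hp hq).1 hstep⟩, t, by simpa using hq,
      by simpa using ht⟩, Sigma.subtype_ext (Subtype.ext (by simp)) rfl⟩

lemma oscCount_succ (hp : p ∈ weylChamber) (m : ℕ) :
    oscCount (m + 1) p = ∑ d ∈ unitSteps, oscCount m (p + d) := by
  rw [oscCount_of_mem hp, Oosc_succ (k := 3) ⟨isShape_shapeOf hp, rfl⟩,
    ← Nat.card_congr (oscTabLastStepEquiv hp m), Nat.card_sigma]
  exact Finset.sum_coe_sort unitSteps (fun d => oscCount m (p + d))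

end TwoRows

section Formula

def oscFormula (m : ℕ) (p : ℤ × ℤ) : ℤ :=
  signedBallot (m + 2) (p.1 + p.2 + 2) * signedBallot m (p.1 - p.2) -
    signedBallot (m + 2) (p.1 - p.2) * signedBallot m (p.1 + p.2 + 2)

variable {p : ℤ × ℤ}

lemma oscFormula_succ (m : ℕ) (p : ℤ × ℤ) :
    oscFormula (m + 1) p = ∑ d ∈ unitSteps, oscFormula m (p + d) := by
  simp only [unitSteps, oscFormula, signedBallot]
  rw [Finset.sum_insert (by decide), Finset.sum_insert (by decide), Finset.sum_insert (by decide),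
    Finset.sum_singleton]
  simp only [Prod.fst_add, Prod.snd_add]
  ring_nf

lemma oscFormula_eq_zero_of_wall {m : ℕ} (h : p.2 = -1 ∨ p.2 = p.1 + 1) :
    oscFormula m p = 0 := by
  rcases h with h | h
  · rw [oscFormula, show p.1 + p.2 + 2 = p.1 - p.2 by omega]; ring
  · rw [oscFormula, show p.1 - p.2 = -1 by omega, signedBallot_neg_one, signedBallot_neg_one]; ring

lemma oscFormula_zero (hp : p ∈ weylChamber) : oscFormula 0 p = if p = 0 then 1 else 0 := by
  obtain ⟨hp2, hp1⟩ := hp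
  rw [oscFormula, signedBallot_zero_of_pos (by omega : 0 < p.1 + p.2 + 2), mul_zero, sub_zero]
  split_ifs with h
  · subst h; decide
  · rw [Prod.ext_iff] at h
    rcases (sub_nonneg.2 hp1).eq_or_lt with hb | hb
    · rw [signedBallot_two_of_pos (by simp only [Prod.fst_zero, Prod.snd_zero] at h; omega),
        zero_mul]
    · rw [signedBallot_zero_of_pos hb, mul_zero]

lemma oscCount_eq_oscFormula (m : ℕ) (hp : p ∈ weylChamber) :
    (oscCount m p : ℤ) = oscFormula m p := by
  induction m generalizing p with
  | zero =>
    rw [oscCount_of_mem hp, oscFormula_zero hp]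
    split_ifs with h
    · rw [h, shapeOf_zero, Oosc_emptyShape_zero, Nat.cast_one]
    · rw [Oosc_zero_of_ne fun h' => h (shapeOf_injOn hp ⟨le_rfl, le_rfl⟩
        (h'.trans shapeOf_zero.symm)), Nat.cast_zero]
  | succ m ih =>
    rw [oscCount_succ hp, oscFormula_succ, Nat.cast_sum]
    refine Finset.sum_congr rfl fun d hd => ?_
    by_cases hpd : p + d ∈ weylChamber
    · exact ih hpd
    · rw [oscCount_of_not_mem hpd, oscFormula_eq_zero_of_wall]
      · rfl
      obtain ⟨d1, d2⟩ := d
      simp only [unitSteps, Finset.mem_insert, Finset.mem_singleton, Prod.mk.injEq] at hd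
      rw [mem_weylChamber] at hp hpd
      simp only [Prod.fst_add, Prod.snd_add] at hpd ⊢
      omega

end Formula

/-- for a two-row shape `λ = (x₁, x₂)`, with `h₁ = x₁ + x₂`, `h₂ = x₁ − x₂`,
`O_3^0(λ, m) = F(m+2, h₁+2)·F(m, h₂) − F(m+2, h₂)·F(m, h₁+2)`. -/
theorem Oosc_three_formula (x1 x2 : ℕ) (hx : x2 ≤ x1) (m : ℕ) :
    (Oosc 3 (twoRowShape x1 x2) m : ℤ) =
      (Fpath (m + 2) (x1 + x2 + 2) : ℤ) * (Fpath m (x1 - x2) : ℤ)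
        - (Fpath (m + 2) (x1 - x2) : ℤ) * (Fpath m (x1 + x2 + 2) : ℤ) := by
  have hp : ((x1 : ℤ), (x2 : ℤ)) ∈ weylChamber :=
    mem_weylChamber.2 ⟨by simp, by simpa using hx⟩
  have hshape : shapeOf (x1, x2) = twoRowShape x1 x2 := by simp [shapeOf]
  rw [← hshape, ← oscCount_of_mem hp, oscCount_eq_oscFormula m hp, oscFormula]
  simp only [Fpath_eq_signedBallot]
  push_cast [Nat.cast_sub hx]
  rfl
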